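/- The McCormick relaxation gap of the lower envelope is bounded: for x ∈ [x̲,x̄], y ∈ [y̲,ȳ], the difference xy − max(x̲y + xy̲ − x̲y̲, x̄y + xȳ − x̄ȳ) is at most (x̄ − x̲)(ȳ − y̲)/4. -/

import Mathlib

/-!
Subtracting each McCormick underestimator from `x * y` leaves a product of distances to the box
corners: `(x - lx) * (y - ly)` and `(ux - x) * (uy - y)`. The gap is therefore the smaller of two
products `p * q` and `r * s` with `p + r = ux - lx` and `q + s = uy - ly`, and that minimum is at
most the geometric mean `√(p r) * √(q s)`, hence by AM-GM at most `(p + r) (q + s) / 4`.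
-/

variable {α : Type*} [Field α] [LinearOrder α] [IsStrictOrderedRing α]

lemma min_mul_le_add_mul_add_div_four {p q r s : α} (hp : 0 ≤ p) (hq : 0 ≤ q) (hr : 0 ≤ r)
    (hs : 0 ≤ s) : min (p * q) (r * s) ≤ (p + r) * (q + s) / 4 := by
  set m := min (p * q) (r * s)
  have hm : 0 ≤ m := le_min (mul_nonneg hp hq) (mul_nonneg hr hs)
  have hm_sq : m ^ 2 ≤ (p * r) * (q * s) :=
    calc m ^ 2 = m * m := sq m
      _ ≤ (p * q) * (r * s) :=
        mul_le_mul (min_le_left _ _) (min_le_right _ _) hm (mul_nonneg hp hq)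
      _ = (p * r) * (q * s) := by ring
  have hpr : 4 * p * r ≤ (p + r) ^ 2 := four_mul_le_sq_add p r
  have hqs : 4 * q * s ≤ (q + s) ^ 2 := four_mul_le_sq_add q s
  have h16 : (4 * m) ^ 2 ≤ ((p + r) * (q + s)) ^ 2 :=
    calc (4 * m) ^ 2 ≤ (4 * p * r) * (4 * q * s) := by linarith [hm_sq]
      _ ≤ (p + r) ^ 2 * (q + s) ^ 2 :=
        mul_le_mul hpr hqs (by positivity) (sq_nonneg _)
      _ = ((p + r) * (q + s)) ^ 2 := (mul_pow _ _ _).symm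
  have h4m := (sq_le_sq₀ (by positivity) (by positivity)).1 h16
  linarith

lemma mul_sub_max_mccormick_eq_min (x y lx ux ly uy : α) :
    x * y - max (lx * y + x * ly - lx * ly) (ux * y + x * uy - ux * uy)
      = min ((x - lx) * (y - ly)) ((ux - x) * (uy - y)) := by
  rw [← min_sub_sub_left]
  congr 1 <;> ring

theorem mccormick_gap_bound
    (x y lx ux ly uy : ℝ)
    (hx1 : lx ≤ x) (hx2 : x ≤ ux) (hy1 : ly ≤ y) (hy2 : y ≤ uy) :
    x * y - max (lx * y + x * ly - lx * ly) (ux * y + x * uy - ux * uy)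
      ≤ (ux - lx) * (uy - ly) / 4 := by
  rw [mul_sub_max_mccormick_eq_min]
  calc min ((x - lx) * (y - ly)) ((ux - x) * (uy - y))
      ≤ ((x - lx) + (ux - x)) * ((y - ly) + (uy - y)) / 4 :=
        min_mul_le_add_mul_add_div_four (sub_nonneg.2 hx1) (sub_nonneg.2 hy1)
          (sub_nonneg.2 hx2) (sub_nonneg.2 hy2)
    _ = (ux - lx) * (uy - ly) / 4 := by ring
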